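/- In System D, the standard (operational) reduction relation on commands is deterministic: if c ↦ c₁ and c ↦ c₂ then c₁ = c₂. -/

import Mathlib

/-!  System D / System CD: a core, fully dual, multi-discipline sequent
     calculus with user-declared data and codata types (the connectives of
     the core System D — ⊕, ⊗, 0, 1, &, ⅋, ⊤, ⊥, ¬, ∼ and the four families
     of polarity shifts — arise as particular declarations), together with
     native existential and universal type quantifiers. -/

namespace SysD

/-- Evaluation disciplines: call-by-value (+), call-by-name (−),
    call-by-need (lv) and call-by-coneed (ln). -/
inductive Disc : Type
| pos | neg | lv | ln
deriving DecidableEq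

/-- Types: discipline-annotated type variables, declared connectives applied
    to type arguments, and the existential/universal quantifiers. -/
inductive Ty : Type
| tvar : Disc → Nat → Ty
| fcon : Nat → List Ty → Ty
| ex : Disc → Nat → Ty → Ty      -- ∃X:S.A
| all : Disc → Nat → Ty → Ty     -- ∀X:S.A

mutual
  /-- Substitution of a type for a type variable. -/
  def substTy : Ty → Nat → Ty → Ty
  | .tvar S Y, X, B => if Y = X then B else .tvar S Y
  | .fcon F Cs, X, B => .fcon F (substTyList Cs X B)
  | .ex S Y A, X, B => if Y = X then .ex S Y A else .ex S Y (substTy A X B)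
  | .all S Y A, X, B => if Y = X then .all S Y A else .all S Y (substTy A X B)

  def substTyList : List Ty → Nat → Ty → List Ty
  | [], _, _ => []
  | C :: Cs, X, B => substTy C X B :: substTyList Cs X B
end

/-- The signature of a single constructor (for data) or destructor (for
    codata): hidden/private type parameters Ȳ with their kinds, term inputs
    Ā, and coterm inputs B̄.  By convention the declaration's parameters X̄
    are referred to inside the component types as the type variables
    0, …, n−1 and the privates as n, n+1, …. -/
structure ConSig where
  tyArgs : List Disc
  tmArgs : List Ty
  coArgs : List Ty

/-- A (co)data declaration: data F (X̄:k̄) : S with K_i : ∀Ȳᵢ. Āᵢ ⊢ F X̄ | B̄ᵢ,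
    or dually codata G (X̄:k̄) : S with O_i : ∀Ȳᵢ. Āᵢ | G X̄ ⊢ B̄ᵢ. -/
structure Decl where
  isData : Bool
  params : List Disc
  disc : Disc
  sigs : List ConSig

/-- A global environment of declarations. -/
def GEnv : Type := Nat → Option Decl

mutual
  /-- Terms (producers). -/
  inductive Tm : Type
  | var : Nat → Tm
  | mu : Nat → Cmd → Tm                              -- μα.c
  | con : Nat → Nat → List Ty → CoTms → Tms → Tm     -- K_i B̄ ē v̄ of connective F
  | cocase : Branches → Tm                           -- cocase{O X̄ x̄ ᾱ ⇒ c | …}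
  | pack : Ty → Tm → Tm                              -- pack B W : ∃X:S.A
  | lamSpec : Nat → Nat → Cmd → Tm                   -- λ[spec X α].c : ∀X:S.A

  /-- Coterms (consumers). -/
  inductive CoTm : Type
  | covar : Nat → CoTm
  | mut : Nat → Cmd → CoTm                           -- μ̃x.c
  | des : Nat → Nat → List Ty → Tms → CoTms → CoTm   -- O_i B̄ v̄ ē of connective G
  | cases : Branches → CoTm                          -- case{K X̄ ᾱ x̄ ⇒ c | …}
  | spec : Ty → CoTm → CoTm                          -- spec B F : ∀X:S.A
  | casePack : Nat → Nat → Cmd → CoTm                -- μ̃(pack X y).c : ∃X:S.A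

  inductive Tms : Type
  | nil : Tms
  | cons : Tm → Tms → Tms

  inductive CoTms : Type
  | nil : CoTms
  | cons : CoTm → CoTms → CoTms

  /-- A branch binds private type variables, covariables, and variables. -/
  inductive Branch : Type
  | mk : List Nat → List Nat → List Nat → Cmd → Branch

  inductive Branches : Type
  | nil : Branches
  | cons : Branch → Branches → Branches

  /-- Commands, annotated by the discipline of the cut type. -/
  inductive Cmd : Type
  | cut : Tm → Disc → CoTm → Cmd
end

def Branches.get? : Branches → Nat → Option Branch
| .nil, _ => none
| .cons b _, 0 => some b
| .cons _ bs, n+1 => bs.get? n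

/- Substitution of a term for a variable. -/
mutual
  def substVTm : Tm → Nat → Tm → Tm
  | .var y, x, v => if y = x then v else .var y
  | .mu a c, x, v => .mu a (substVCmd c x v)
  | .con F i Bs es vs, x, v => .con F i Bs (substVCoTms es x v) (substVTms vs x v)
  | .cocase brs, x, v => .cocase (substVBrs brs x v)
  | .pack B w, x, v => .pack B (substVTm w x v)
  | .lamSpec X a c, x, v => .lamSpec X a (substVCmd c x v)

  def substVCo : CoTm → Nat → Tm → CoTm
  | .covar b, _, _ => .covar b
  | .mut y c, x, v => if y = x then .mut y c else .mut y (substVCmd c x v)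
  | .des F i Bs vs es, x, v => .des F i Bs (substVTms vs x v) (substVCoTms es x v)
  | .cases brs, x, v => .cases (substVBrs brs x v)
  | .spec B f, x, v => .spec B (substVCo f x v)
  | .casePack X y c, x, v =>
      if y = x then .casePack X y c else .casePack X y (substVCmd c x v)

  def substVTms : Tms → Nat → Tm → Tms
  | .nil, _, _ => .nil
  | .cons t ts, x, v => .cons (substVTm t x v) (substVTms ts x v)

  def substVCoTms : CoTms → Nat → Tm → CoTms
  | .nil, _, _ => .nil
  | .cons e es, x, v => .cons (substVCo e x v) (substVCoTms es x v)

  def substVBr : Branch → Nat → Tm → Branch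
  | .mk tys cvs xs c, x, v =>
      if x ∈ xs then .mk tys cvs xs c else .mk tys cvs xs (substVCmd c x v)

  def substVBrs : Branches → Nat → Tm → Branches
  | .nil, _, _ => .nil
  | .cons b bs, x, v => .cons (substVBr b x v) (substVBrs bs x v)

  def substVCmd : Cmd → Nat → Tm → Cmd
  | .cut t S e, x, v => .cut (substVTm t x v) S (substVCo e x v)
end

/- Substitution of a coterm for a covariable. -/
mutual
  def substETm : Tm → Nat → CoTm → Tm
  | .var y, _, _ => .var y
  | .mu b c, a, e => if b = a then .mu b c else .mu b (substECmd c a e)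
  | .con F i Bs es vs, a, e => .con F i Bs (substECoTms es a e) (substETms vs a e)
  | .cocase brs, a, e => .cocase (substEBrs brs a e)
  | .pack B w, a, e => .pack B (substETm w a e)
  | .lamSpec X b c, a, e =>
      if b = a then .lamSpec X b c else .lamSpec X b (substECmd c a e)

  def substECo : CoTm → Nat → CoTm → CoTm
  | .covar b, a, e => if b = a then e else .covar b
  | .mut y c, a, e => .mut y (substECmd c a e)
  | .des F i Bs vs es, a, e => .des F i Bs (substETms vs a e) (substECoTms es a e)
  | .cases brs, a, e => .cases (substEBrs brs a e)
  | .spec B f, a, e => .spec B (substECo f a e)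
  | .casePack X y c, a, e => .casePack X y (substECmd c a e)

  def substETms : Tms → Nat → CoTm → Tms
  | .nil, _, _ => .nil
  | .cons t ts, a, e => .cons (substETm t a e) (substETms ts a e)

  def substECoTms : CoTms → Nat → CoTm → CoTms
  | .nil, _, _ => .nil
  | .cons e' es, a, e => .cons (substECo e' a e) (substECoTms es a e)

  def substEBr : Branch → Nat → CoTm → Branch
  | .mk tys cvs xs c, a, e =>
      if a ∈ cvs then .mk tys cvs xs c else .mk tys cvs xs (substECmd c a e)

  def substEBrs : Branches → Nat → CoTm → Branches
  | .nil, _, _ => .nil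
  | .cons b bs, a, e => .cons (substEBr b a e) (substEBrs bs a e)

  def substECmd : Cmd → Nat → CoTm → Cmd
  | .cut t S e', a, e => .cut (substETm t a e) S (substECo e' a e)
end

/- Substitution of a type for a type variable in program syntax. -/
mutual
  def substTTm : Tm → Nat → Ty → Tm
  | .var y, _, _ => .var y
  | .mu a c, X, B => .mu a (substTCmd c X B)
  | .con F i Bs es vs, X, B =>
      .con F i (substTyList Bs X B) (substTCoTms es X B) (substTTms vs X B)
  | .cocase brs, X, B => .cocase (substTBrs brs X B)
  | .pack C w, X, B => .pack (substTy C X B) (substTTm w X B)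
  | .lamSpec Y a c, X, B =>
      if Y = X then .lamSpec Y a c else .lamSpec Y a (substTCmd c X B)

  def substTCo : CoTm → Nat → Ty → CoTm
  | .covar b, _, _ => .covar b
  | .mut y c, X, B => .mut y (substTCmd c X B)
  | .des F i Bs vs es, X, B =>
      .des F i (substTyList Bs X B) (substTTms vs X B) (substTCoTms es X B)
  | .cases brs, X, B => .cases (substTBrs brs X B)
  | .spec C f, X, B => .spec (substTy C X B) (substTCo f X B)
  | .casePack Y y c, X, B =>
      if Y = X then .casePack Y y c else .casePack Y y (substTCmd c X B)

  def substTTms : Tms → Nat → Ty → Tms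
  | .nil, _, _ => .nil
  | .cons t ts, X, B => .cons (substTTm t X B) (substTTms ts X B)

  def substTCoTms : CoTms → Nat → Ty → CoTms
  | .nil, _, _ => .nil
  | .cons e es, X, B => .cons (substTCo e X B) (substTCoTms es X B)

  def substTBr : Branch → Nat → Ty → Branch
  | .mk tys cvs xs c, X, B =>
      if X ∈ tys then .mk tys cvs xs c else .mk tys cvs xs (substTCmd c X B)

  def substTBrs : Branches → Nat → Ty → Branches
  | .nil, _, _ => .nil
  | .cons b bs, X, B => .cons (substTBr b X B) (substTBrs bs X B)

  def substTCmd : Cmd → Nat → Ty → Cmd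
  | .cut t S e, X, B => .cut (substTTm t X B) S (substTCo e X B)
end

/-- Iterated substitution of a list of terms for a list of variables. -/
def substVsCmd : Cmd → List Nat → Tms → Cmd
| c, [], _ => c
| c, _, .nil => c
| c, x :: xs, .cons v vs => substVsCmd (substVCmd c x v) xs vs

def substEsCmd : Cmd → List Nat → CoTms → Cmd
| c, [], _ => c
| c, _, .nil => c
| c, a :: as_, .cons e es => substEsCmd (substECmd c a e) as_ es

def substTsCmd : Cmd → List Nat → List Ty → Cmd
| c, [], _ => c
| c, _, [] => c
| c, X :: Xs, B :: Bs => substTsCmd (substTCmd c X B) Xs Bs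

/- Free (co)variables. -/
mutual
  def fvTm : Tm → List Nat
  | .var y => [y]
  | .mu _ c => fvCmd c
  | .con _ _ _ es vs => fvCoTms es ++ fvTms vs
  | .cocase brs => fvBrs brs
  | .pack _ w => fvTm w
  | .lamSpec _ _ c => fvCmd c

  def fvCo : CoTm → List Nat
  | .covar _ => []
  | .mut y c => (fvCmd c).filter (· ≠ y)
  | .des _ _ _ vs es => fvTms vs ++ fvCoTms es
  | .cases brs => fvBrs brs
  | .spec _ f => fvCo f
  | .casePack _ y c => (fvCmd c).filter (· ≠ y)

  def fvTms : Tms → List Nat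
  | .nil => []
  | .cons t ts => fvTm t ++ fvTms ts

  def fvCoTms : CoTms → List Nat
  | .nil => []
  | .cons e es => fvCo e ++ fvCoTms es

  def fvBr : Branch → List Nat
  | .mk _ _ xs c => (fvCmd c).filter (· ∉ xs)

  def fvBrs : Branches → List Nat
  | .nil => []
  | .cons b bs => fvBr b ++ fvBrs bs

  def fvCmd : Cmd → List Nat
  | .cut t _ e => fvTm t ++ fvCo e
end

mutual
  def fcvTm : Tm → List Nat
  | .var _ => []
  | .mu b c => (fcvCmd c).filter (· ≠ b)
  | .con _ _ _ es vs => fcvCoTms es ++ fcvTms vs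
  | .cocase brs => fcvBrs brs
  | .pack _ w => fcvTm w
  | .lamSpec _ b c => (fcvCmd c).filter (· ≠ b)

  def fcvCo : CoTm → List Nat
  | .covar b => [b]
  | .mut _ c => fcvCmd c
  | .des _ _ _ vs es => fcvTms vs ++ fcvCoTms es
  | .cases brs => fcvBrs brs
  | .spec _ f => fcvCo f
  | .casePack _ _ c => fcvCmd c

  def fcvTms : Tms → List Nat
  | .nil => []
  | .cons t ts => fcvTm t ++ fcvTms ts

  def fcvCoTms : CoTms → List Nat
  | .nil => []
  | .cons e es => fcvCo e ++ fcvCoTms es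

  def fcvBr : Branch → List Nat
  | .mk _ cvs _ c => (fcvCmd c).filter (· ∉ cvs)

  def fcvBrs : Branches → List Nat
  | .nil => []
  | .cons b bs => fcvBr b ++ fcvBrs bs

  def fcvCmd : Cmd → List Nat
  | .cut t _ e => fcvTm t ++ fcvCo e
end

/- Weak-head normal terms W and forcing coterms F. -/
mutual
  inductive IsW : Tm → Prop
  | var (x : Nat) : IsW (.var x)
  | con {es : CoTms} {vs : Tms} (F i : Nat) (Bs : List Ty) :
      AllF es → AllW vs → IsW (.con F i Bs es vs)
  | cocase (brs : Branches) : IsW (.cocase brs)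
  | pack {w : Tm} (B : Ty) : IsW w → IsW (.pack B w)
  | lamSpec (X a : Nat) (c : Cmd) : IsW (.lamSpec X a c)

  inductive AllW : Tms → Prop
  | nil : AllW .nil
  | cons {t : Tm} {ts : Tms} : IsW t → AllW ts → AllW (.cons t ts)

  inductive IsF : CoTm → Prop
  | covar (a : Nat) : IsF (.covar a)
  | des {vs : Tms} {es : CoTms} (F i : Nat) (Bs : List Ty) :
      AllW vs → AllF es → IsF (.des F i Bs vs es)
  | cases (brs : Branches) : IsF (.cases brs)
  | spec {f : CoTm} (B : Ty) : IsF f → IsF (.spec B f)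
  | casePack (X y : Nat) (c : Cmd) : IsF (.casePack X y c)

  inductive AllF : CoTms → Prop
  | nil : AllF .nil
  | cons {e : CoTm} {es : CoTms} : IsF e → AllF es → AllF (.cons e es)
end

/-- Heap contexts: stacks of delayed call-by-need variable bindings and
    call-by-coneed covariable bindings:
    H ::= □ | ⟨v ‖ μ̃x.H⟩ (at lv) | ⟨μα.H ‖ e⟩ (at ln). -/
inductive Heap : Type
| hole : Heap
| lvBind : Tm → Nat → Heap → Heap
| lnBind : Nat → Heap → CoTm → Heap

def Heap.fill : Heap → Cmd → Cmd
| .hole, c => c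
| .lvBind v x H, c => .cut v .lv (.mut x (H.fill c))
| .lnBind a H e, c => .cut (.mu a (H.fill c)) .ln e

def Heap.BindsVar : Heap → Nat → Prop
| .hole, _ => False
| .lvBind _ x H, y => x = y ∨ H.BindsVar y
| .lnBind _ H _, y => H.BindsVar y

def Heap.BindsCovar : Heap → Nat → Prop
| .hole, _ => False
| .lvBind _ _ H, b => H.BindsCovar b
| .lnBind a H _, b => a = b ∨ H.BindsCovar b

/-- Discipline-indexed values:  V₊ = W,  V₋ = any term,  V_lv = W,
    V_ln = W or μα.H[⟨V_ln ‖ α⟩] where H does not rebind α. -/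
inductive Val : Disc → Tm → Prop
| pos {v : Tm} : IsW v → Val .pos v
| neg (v : Tm) : Val .neg v
| lv {v : Tm} : IsW v → Val .lv v
| lnW {v : Tm} : IsW v → Val .ln v
| lnMu {v : Tm} {H : Heap} (a : Nat) :
    Val .ln v → ¬ H.BindsCovar a →
    Val .ln (.mu a (H.fill (.cut v .ln (.covar a))))

/-- Discipline-indexed covalues:  E₊ = any coterm,  E₋ = F,  E_ln = F,
    E_lv = F or μ̃x.H[⟨x ‖ E_lv⟩] where H does not rebind x. -/
inductive Coval : Disc → CoTm → Prop
| pos (e : CoTm) : Coval .pos e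
| neg {e : CoTm} : IsF e → Coval .neg e
| ln {e : CoTm} : IsF e → Coval .ln e
| lvF {e : CoTm} : IsF e → Coval .lv e
| lvMut {e : CoTm} {H : Heap} (x : Nat) :
    Coval .lv e → ¬ H.BindsVar x →
    Coval .lv (.mut x (H.fill (.cut (.var x) .lv e)))

/-- The standard (operational) reduction of System D/CD. -/
inductive Step : Cmd → Cmd → Prop
| betaMu {S : Disc} {e : CoTm} (a : Nat) (c : Cmd) :
    S ≠ .ln → Coval S e →
    Step (.cut (.mu a c) S e) (substECmd c a e)
| betaMut {S : Disc} {v : Tm} (x : Nat) (c : Cmd) :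
    S ≠ .lv → Val S v →
    Step (.cut v S (.mut x c)) (substVCmd c x v)
| betaMuConeed {e : CoTm} (a : Nat) (c : Cmd) :
    Val .ln (.mu a c) → (∀ b, e ≠ .covar b) → Coval .ln e →
    Step (.cut (.mu a c) .ln e) (substECmd c a e)
| betaMutNeed {v : Tm} (x : Nat) (c : Cmd) :
    Coval .lv (.mut x c) → (∀ y, v ≠ .var y) → Val .lv v →
    Step (.cut v .lv (.mut x c)) (substVCmd c x v)
| betaP {es : CoTms} {vs : Tms} {brs : Branches}
    (F i : Nat) (Bs : List Ty) (S : Disc) (tys cvs xs : List Nat) (c : Cmd) :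
    brs.get? i = some (.mk tys cvs xs c) →
    AllF es → AllW vs →
    Step (.cut (.con F i Bs es vs) S (.cases brs))
         (substVsCmd (substEsCmd (substTsCmd c tys Bs) cvs es) xs vs)
| betaQ {vs : Tms} {es : CoTms} {brs : Branches}
    (F i : Nat) (Bs : List Ty) (S : Disc) (tys xs cvs : List Nat) (c : Cmd) :
    brs.get? i = some (.mk tys cvs xs c) →
    AllW vs → AllF es →
    Step (.cut (.cocase brs) S (.des F i Bs vs es))
         (substEsCmd (substVsCmd (substTsCmd c tys Bs) xs vs) cvs es)
| betaPack {w : Tm} (B : Ty) (X y : Nat) (c : Cmd) :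
    IsW w →
    Step (.cut (.pack B w) .pos (.casePack X y c))
         (substVCmd (substTCmd c X B) y w)
| betaSpec {f : CoTm} (B : Ty) (X a : Nat) (c : Cmd) :
    IsF f →
    Step (.cut (.lamSpec X a c) .neg (.spec B f))
         (substECmd (substTCmd c X B) a f)
| heap {c c' : Cmd} (H : Heap) :
    Step c c' → Step (H.fill c) (H.fill c')

/-- A command that admits no standard reduction step. -/
def Irred (c : Cmd) : Prop := ¬ ∃ c', Step c c'

/-- `x` is a needed variable of `c`. -/
def NeededVar (c : Cmd) (x : Nat) : Prop :=
  Irred c ∧ ∃ (H : Heap) (S : Disc) (E : CoTm),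
    Coval S E ∧ ¬ H.BindsVar x ∧ c = H.fill (.cut (.var x) S E)

/-- `a` is a needed covariable of `c`. -/
def NeededCovar (c : Cmd) (a : Nat) : Prop :=
  Irred c ∧ ∃ (H : Heap) (S : Disc) (V : Tm),
    Val S V ∧ ¬ H.BindsCovar a ∧ c = H.fill (.cut V S (.covar a))

/-- A command is finished when it needs some (co)variable. -/
def Finished (c : Cmd) : Prop :=
  Irred c ∧ ∃ z, NeededVar c z ∨ NeededCovar c z

/-- A command is stuck when it cannot step and needs no (co)variable. -/
def Stuck (c : Cmd) : Prop :=
  Irred c ∧ ¬ ∃ z, NeededVar c z ∨ NeededCovar c z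

end SysD

namespace SysD

/-! A standard step factors as `H[r] ↦ H[r']` with `r ↦ r'` a head step, and head steps are
deterministic, so it suffices that this factorisation is unique. The heap rule and the head rules
overlap only at `⟨v ‖ μ̃x.c⟩` (call-by-need) and dually `⟨μα.c ‖ e⟩` (call-by-coneed), where a
head rule fires only when `μ̃x.c` is a covalue (`μα.c` a value), i.e. when `c` is blocked on `x`
(on `α`).
A blocked command has no redex inside its heap context: it is blocked on exactly one
(co)variable, which its heap does not bind, so none of the heap's binders can fire either. -/

inductive HeadStep : Cmd → Cmd → Prop
| betaMu {S : Disc} {e : CoTm} (a : Nat) (c : Cmd) :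
    S ≠ .ln → Coval S e →
    HeadStep (.cut (.mu a c) S e) (substECmd c a e)
| betaMut {S : Disc} {v : Tm} (x : Nat) (c : Cmd) :
    S ≠ .lv → Val S v →
    HeadStep (.cut v S (.mut x c)) (substVCmd c x v)
| betaMuConeed {e : CoTm} (a : Nat) (c : Cmd) :
    Val .ln (.mu a c) → (∀ b, e ≠ .covar b) → Coval .ln e →
    HeadStep (.cut (.mu a c) .ln e) (substECmd c a e)
| betaMutNeed {v : Tm} (x : Nat) (c : Cmd) :
    Coval .lv (.mut x c) → (∀ y, v ≠ .var y) → Val .lv v →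
    HeadStep (.cut v .lv (.mut x c)) (substVCmd c x v)
| betaP {es : CoTms} {vs : Tms} {brs : Branches}
    (F i : Nat) (Bs : List Ty) (S : Disc) (tys cvs xs : List Nat) (c : Cmd) :
    brs.get? i = some (.mk tys cvs xs c) →
    AllF es → AllW vs →
    HeadStep (.cut (.con F i Bs es vs) S (.cases brs))
         (substVsCmd (substEsCmd (substTsCmd c tys Bs) cvs es) xs vs)
| betaQ {vs : Tms} {es : CoTms} {brs : Branches}
    (F i : Nat) (Bs : List Ty) (S : Disc) (tys xs cvs : List Nat) (c : Cmd) :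
    brs.get? i = some (.mk tys cvs xs c) →
    AllW vs → AllF es →
    HeadStep (.cut (.cocase brs) S (.des F i Bs vs es))
         (substEsCmd (substVsCmd (substTsCmd c tys Bs) xs vs) cvs es)
| betaPack {w : Tm} (B : Ty) (X y : Nat) (c : Cmd) :
    IsW w →
    HeadStep (.cut (.pack B w) .pos (.casePack X y c))
         (substVCmd (substTCmd c X B) y w)
| betaSpec {f : CoTm} (B : Ty) (X a : Nat) (c : Cmd) :
    IsF f →
    HeadStep (.cut (.lamSpec X a c) .neg (.spec B f))
         (substECmd (substTCmd c X B) a f)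

def Heap.comp : Heap → Heap → Heap
| .hole, K => K
| .lvBind v x H, K => .lvBind v x (H.comp K)
| .lnBind a H e, K => .lnBind a (H.comp K) e

theorem Heap.fill_comp (H K : Heap) (c : Cmd) : (H.comp K).fill c = H.fill (K.fill c) := by
  induction H <;> simp [Heap.comp, Heap.fill, *]

theorem Step.exists_headStep {c c' : Cmd} (h : Step c c') :
    ∃ (H : Heap) (d e : Cmd), HeadStep d e ∧ c = H.fill d ∧ c' = H.fill e := by
  induction h with
  | betaMu a c h₁ h₂ => exact ⟨.hole, _, _, .betaMu a c h₁ h₂, rfl, rfl⟩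
  | betaMut x c h₁ h₂ => exact ⟨.hole, _, _, .betaMut x c h₁ h₂, rfl, rfl⟩
  | betaMuConeed a c h₁ h₂ h₃ => exact ⟨.hole, _, _, .betaMuConeed a c h₁ h₂ h₃, rfl, rfl⟩
  | betaMutNeed x c h₁ h₂ h₃ => exact ⟨.hole, _, _, .betaMutNeed x c h₁ h₂ h₃, rfl, rfl⟩
  | betaP F i Bs S tys cvs xs c h₁ h₂ h₃ =>
    exact ⟨.hole, _, _, .betaP F i Bs S tys cvs xs c h₁ h₂ h₃, rfl, rfl⟩
  | betaQ F i Bs S tys xs cvs c h₁ h₂ h₃ =>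
    exact ⟨.hole, _, _, .betaQ F i Bs S tys xs cvs c h₁ h₂ h₃, rfl, rfl⟩
  | betaPack B X y c h₁ => exact ⟨.hole, _, _, .betaPack B X y c h₁, rfl, rfl⟩
  | betaSpec B X a c h₁ => exact ⟨.hole, _, _, .betaSpec B X a c h₁, rfl, rfl⟩
  | heap H _ ih =>
    obtain ⟨K, d, e, hs, rfl, rfl⟩ := ih
    exact ⟨H.comp K, d, e, hs, (Heap.fill_comp H K d).symm, (Heap.fill_comp H K e).symm⟩

theorem IsW.not_mu {a : Nat} {c : Cmd} : ¬ IsW (.mu a c) := nofun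

theorem IsF.not_mut {x : Nat} {c : Cmd} : ¬ IsF (.mut x c) := nofun

/-- `Demands c (.inl x)`: `c = H[⟨x ‖ E⟩]` at call-by-need, with `E` a covalue and `x` not bound
by `H`; `Demands c (.inr a)` is the dual, blocked on the covariable `a`. A covalue
`μ̃y.H'[⟨y ‖ E'⟩]` is unfolded into the premise of `varMut`, so that rule induction reaches the
inner demand. -/
inductive Demands : Cmd → Nat ⊕ Nat → Prop
| varF {E : CoTm} (x : Nat) : IsF E → Demands (.cut (.var x) .lv E) (.inl x)
| varMut {c : Cmd} (x y : Nat) :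
    Demands c (.inl y) → Demands (.cut (.var x) .lv (.mut y c)) (.inl x)
| covarW {V : Tm} (a : Nat) : IsW V → Demands (.cut V .ln (.covar a)) (.inr a)
| covarMu {c : Cmd} (a b : Nat) :
    Demands c (.inr b) → Demands (.cut (.mu b c) .ln (.covar a)) (.inr a)
| lvBind {c : Cmd} {z : Nat ⊕ Nat} (v : Tm) (y : Nat) :
    Demands c z → z ≠ .inl y → Demands (.cut v .lv (.mut y c)) z
| lnBind {c : Cmd} {z : Nat ⊕ Nat} (b : Nat) (e : CoTm) :
    Demands c z → z ≠ .inr b → Demands (.cut (.mu b c) .ln e) z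

namespace Demands

theorem heap_fill_inl {c : Cmd} {x : Nat} (h : Demands c (.inl x)) :
    ∀ {H : Heap}, ¬ H.BindsVar x → Demands (H.fill c) (.inl x)
  | .hole, _ => h
  | .lvBind v y _, hK =>
    .lvBind v y (heap_fill_inl h fun hb => hK (.inr hb)) fun hxy =>
      hK (.inl (Sum.inl.inj hxy).symm)
  | .lnBind b _ e, hK => .lnBind b e (heap_fill_inl h hK) Sum.inl_ne_inr

theorem heap_fill_inr {c : Cmd} {a : Nat} (h : Demands c (.inr a)) :
    ∀ {H : Heap}, ¬ H.BindsCovar a → Demands (H.fill c) (.inr a)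
  | .hole, _ => h
  | .lvBind v y _, hK => .lvBind v y (heap_fill_inr h hK) Sum.inr_ne_inl
  | .lnBind b _ e, hK =>
    .lnBind b e (heap_fill_inr h fun hb => hK (.inr hb)) fun hab =>
      hK (.inl (Sum.inr.inj hab).symm)

theorem of_coval {x : Nat} {E : CoTm} (h : Coval .lv E) :
    Demands (.cut (.var x) .lv E) (.inl x) := by
  generalize hS : Disc.lv = S at h
  induction h generalizing x with
  | lvF hE => exact .varF x hE
  | lvMut y _ hH ih => exact .varMut x y (heap_fill_inl (ih hS) hH)
  | _ => cases hS

theorem of_val {a : Nat} {V : Tm} (h : Val .ln V) :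
    Demands (.cut V .ln (.covar a)) (.inr a) := by
  generalize hS : Disc.ln = S at h
  induction h generalizing a with
  | lnW hV => exact .covarW a hV
  | lnMu b _ hH ih => exact .covarMu a b (heap_fill_inr (ih hS) hH)
  | _ => cases hS

end Demands

theorem Coval.demands {x : Nat} {c : Cmd} (h : Coval .lv (.mut x c)) : Demands c (.inl x) := by
  cases h with
  | lvF hF => exact absurd hF IsF.not_mut
  | lvMut _ hE hH => exact Demands.heap_fill_inl (.of_coval hE) hH

theorem Val.demands {a : Nat} {c : Cmd} (h : Val .ln (.mu a c)) : Demands c (.inr a) := by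
  cases h with
  | lnW hW => exact absurd hW IsW.not_mu
  | lnMu _ hV hH => exact Demands.heap_fill_inr (.of_val hV) hH

namespace Demands

theorem unique {c : Cmd} {z₁ z₂ : Nat ⊕ Nat} (h₁ : Demands c z₁) (h₂ : Demands c z₂) :
    z₁ = z₂ := by
  induction h₁ generalizing z₂ with
  | varF x hF =>
    cases h₂ with
    | varF => rfl
    | varMut => rfl
    | lvBind => exact absurd hF IsF.not_mut
  | varMut x y _ ih =>
    cases h₂ with
    | varF => rfl
    | varMut => rfl
    | lvBind _ _ h hz => exact absurd (ih h).symm hz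
  | covarW a hW =>
    cases h₂ with
    | covarW => rfl
    | covarMu => rfl
    | lnBind => exact absurd hW IsW.not_mu
  | covarMu a b _ ih =>
    cases h₂ with
    | covarW => rfl
    | covarMu => rfl
    | lnBind _ _ h hz => exact absurd (ih h).symm hz
  | lvBind v y h hz ih =>
    cases h₂ with
    | varF _ hF => exact absurd hF IsF.not_mut
    | varMut _ _ h' => exact absurd (ih h') hz
    | lvBind _ _ h' => exact ih h'
  | lnBind b e h hz ih =>
    cases h₂ with
    | covarW _ hW => exact absurd hW IsW.not_mu
    | covarMu _ _ h' => exact absurd (ih h') hz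
    | lnBind _ _ h' => exact ih h'

theorem of_heap_fill {c : Cmd} {z : Nat ⊕ Nat} :
    ∀ {H : Heap}, Demands (H.fill c) z → ∃ z', Demands c z'
  | .hole, h => ⟨z, h⟩
  | .lvBind _ _ _, h => by
    cases h with
    | varF _ hF => exact absurd hF IsF.not_mut
    | varMut _ _ h | lvBind _ _ h => exact of_heap_fill h
  | .lnBind _ _ _, h => by
    cases h with
    | covarW _ hW => exact absurd hW IsW.not_mu
    | covarMu _ _ h | lnBind _ _ h => exact of_heap_fill h

theorem not_headStep {c c' : Cmd} {z : Nat ⊕ Nat} (h : Demands c z) : ¬ HeadStep c c' := by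
  intro hs
  cases hs with
  | betaMu a c hS hE =>
    cases h with
    | covarW | covarMu | lnBind => exact hS rfl
    | lvBind _ _ h hz => exact hz (h.unique hE.demands)
  | betaMut x c hS hV =>
    cases h with
    | varF | varMut | lvBind => exact hS rfl
    | lnBind _ _ h hz => exact hz (h.unique hV.demands)
  | betaMuConeed a c hV he =>
    cases h with
    | covarW | covarMu => exact he _ rfl
    | lnBind _ _ h hz => exact hz (h.unique hV.demands)
  | betaMutNeed x c hE hv =>
    cases h with
    | varF | varMut => exact hv _ rfl
    | lvBind _ _ h hz => exact hz (h.unique hE.demands)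
  | _ => cases h

theorem not_headStep_of_heap_fill {H : Heap} {d e : Cmd} {z : Nat ⊕ Nat}
    (h : Demands (H.fill d) z) : ¬ HeadStep d e :=
  let ⟨_, hd⟩ := h.of_heap_fill
  hd.not_headStep

end Demands

theorem HeadStep.demands_of_lvBind {v : Tm} {x : Nat} {c c' : Cmd}
    (h : HeadStep (.cut v .lv (.mut x c)) c') : Demands c (.inl x) := by
  cases h with
  | betaMu _ _ _ hE | betaMutNeed _ _ hE => exact hE.demands
  | betaMut _ _ hS => exact absurd rfl hS

theorem HeadStep.demands_of_lnBind {a : Nat} {c : Cmd} {e : CoTm} {c' : Cmd}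
    (h : HeadStep (.cut (.mu a c) .ln e) c') : Demands c (.inr a) := by
  cases h with
  | betaMut _ _ _ hV | betaMuConeed _ _ hV => exact hV.demands
  | betaMu _ _ hS => exact absurd rfl hS

theorem HeadStep.deterministic {c c₁ c₂ : Cmd} (h₁ : HeadStep c c₁) (h₂ : HeadStep c c₂) :
    c₁ = c₂ := by
  -- The only critical pair is `⟨μα.c ‖ μ̃x.c'⟩`, and no discipline has both a `μ` among its values
  -- and a `μ̃` among its covalues.
  cases h₁ with
  | betaMu a c hS hE =>
    cases h₂ with
    | betaMut x c' hS' hV =>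
      cases hV with
      | pos hW | lv hW | lnW hW => exact absurd hW IsW.not_mu
      | neg => cases hE with | neg hF => exact absurd hF IsF.not_mut
      | lnMu => exact absurd rfl hS
    | betaMutNeed x c' _ _ hV => cases hV with | lv hW => exact absurd hW IsW.not_mu
    | betaMuConeed => exact absurd rfl hS
    | betaMu => rfl
  | betaMut x c hS hV =>
    cases h₂ with
    | betaMu a c' hS' hE =>
      cases hV with
      | pos hW | lv hW | lnW hW => exact absurd hW IsW.not_mu
      | neg => cases hE with | neg hF => exact absurd hF IsF.not_mut
      | lnMu => exact absurd rfl hS'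
    | betaMuConeed a c' _ _ hE => cases hE with | ln hF => exact absurd hF IsF.not_mut
    | betaMutNeed => exact absurd rfl hS
    | betaMut => rfl
  | betaMuConeed a c _ _ hE =>
    cases h₂ with
    | betaMu _ _ hS => exact absurd rfl hS
    | betaMut => cases hE with | ln hF => exact absurd hF IsF.not_mut
    | betaMuConeed => rfl
  | betaMutNeed x c _ _ hV =>
    cases h₂ with
    | betaMu => cases hV with | lv hW => exact absurd hW IsW.not_mu
    | betaMut _ _ hS => exact absurd rfl hS
    | betaMutNeed => rfl
  | betaP _ _ _ _ _ _ _ _ hget =>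
    cases h₂ with
    | betaP _ _ _ _ _ _ _ _ hget' =>
      obtain ⟨rfl, rfl, rfl, rfl⟩ := Branch.mk.inj (Option.some.inj (hget.symm.trans hget'))
      rfl
  | betaQ _ _ _ _ _ _ _ _ hget =>
    cases h₂ with
    | betaQ _ _ _ _ _ _ _ _ hget' =>
      obtain ⟨rfl, rfl, rfl, rfl⟩ := Branch.mk.inj (Option.some.inj (hget.symm.trans hget'))
      rfl
  | betaPack => cases h₂; rfl
  | betaSpec => cases h₂; rfl

theorem Heap.fill_injective_of_headStep {H₁ H₂ : Heap} {d₁ d₂ e₁ e₂ : Cmd}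
    (h₁ : HeadStep d₁ e₁) (h₂ : HeadStep d₂ e₂) (h : H₁.fill d₁ = H₂.fill d₂) :
    H₁ = H₂ ∧ d₁ = d₂ := by
  induction H₁ generalizing H₂ with
  | hole =>
    cases H₂ with
    | hole => exact ⟨rfl, h⟩
    | lvBind => subst h; exact (h₁.demands_of_lvBind.not_headStep_of_heap_fill h₂).elim
    | lnBind => subst h; exact (h₁.demands_of_lnBind.not_headStep_of_heap_fill h₂).elim
  | lvBind v x K ih =>
    cases H₂ with
    | hole => subst h; exact (h₂.demands_of_lvBind.not_headStep_of_heap_fill h₁).elim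
    | lvBind =>
      simp only [Heap.fill, Cmd.cut.injEq, CoTm.mut.injEq] at h
      obtain ⟨rfl, -, rfl, h⟩ := h
      obtain ⟨rfl, rfl⟩ := ih h
      exact ⟨rfl, rfl⟩
    | lnBind => simp [Heap.fill] at h
  | lnBind a K e ih =>
    cases H₂ with
    | hole => subst h; exact (h₂.demands_of_lnBind.not_headStep_of_heap_fill h₁).elim
    | lvBind => simp [Heap.fill] at h
    | lnBind =>
      simp only [Heap.fill, Cmd.cut.injEq, Tm.mu.injEq] at h
      obtain ⟨⟨rfl, h⟩, -, rfl⟩ := h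
      obtain ⟨rfl, rfl⟩ := ih h
      exact ⟨rfl, rfl⟩

/-- the standard (operational) reduction of System D is
    deterministic. -/
theorem standard_reduction_deterministic :
    ∀ c c₁ c₂ : Cmd, Step c c₁ → Step c c₂ → c₁ = c₂ := by
  intro c c₁ c₂ h₁ h₂
  obtain ⟨H₁, d₁, e₁, hs₁, rfl, rfl⟩ := h₁.exists_headStep
  obtain ⟨H₂, d₂, e₂, hs₂, h, rfl⟩ := h₂.exists_headStep
  obtain ⟨rfl, rfl⟩ := Heap.fill_injective_of_headStep hs₁ hs₂ h
  rw [hs₁.deterministic hs₂]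

end SysD
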